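/- arXiv:math-ph/0512069 — 2 statements merged into one kernel-verified Lean document; each statement's English description precedes it below -/
import Mathlib

section
/- Let H be a self-adjoint operator on a Hilbert space ℋ₁ and S a unitary operator on ℋ₁. For t₀ < 0, define ψ(t) = U₀(t−t₀) Sₜ(−t₀) ψ₀ where U₀(t) = exp(−iHt/ℏ), Sₜ = S for t > 0 and Sₜ = I for t ≤ 0, and Sₜ(r) = U₀(r)† Sₜ U₀(r). Then ψ is the unique solution of the integral equation ψ(t) = e^{−iHt/ℏ}( e^{iHt₀/ℏ}ψ₀ + ∫_{t₀}^t e^{iHr/ℏ}(S−I)ψ(r) d1_r ), where 1_t is the Heaviside indicator (1 for t>0, 0 for t≤0) and the integral against d1_r denotes the jump term 1_t·(value at 0). Moreover each ψ(t) has the same norm as ψ₀. -/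
/-- Single-kick model: ψ(t) = U₀(t−t₀) Sₜ(−t₀) ψ₀ is the unique solution of the
integral equation with jump term, and is norm preserving. -/
theorem stmt0 {E : Type*} [NormedAddCommGroup E] [InnerProductSpace ℂ E]
    (U₀ : ℝ → (E ≃ₗᵢ[ℂ] E)) (hU0 : U₀ 0 = LinearIsometryEquiv.refl ℂ E)
    (hUadd : ∀ s t : ℝ, ∀ x : E, U₀ (s + t) x = U₀ s (U₀ t x))
    (S : E ≃ₗᵢ[ℂ] E) (ψ₀ : E) (t₀ : ℝ) (ht₀ : t₀ < 0)
    (Sfun : ℝ → E → E) (hS : ∀ t x, Sfun t x = if 0 < t then S x else x)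
    (ψ : ℝ → E)
    (hψ : ∀ t, ψ t = U₀ (t - t₀) (U₀ t₀ (Sfun t (U₀ (-t₀) ψ₀)))) :
    (∀ t, ψ t = U₀ t (U₀ (-t₀) ψ₀ + (if 0 < t then S (ψ 0) - ψ 0 else 0))) ∧
    (∀ φ : ℝ → E,
      (∀ t, φ t = U₀ t (U₀ (-t₀) ψ₀ + (if 0 < t then S (φ 0) - φ 0 else 0))) →
      φ = ψ) ∧
    (∀ t, ‖ψ t‖ = ‖ψ₀‖) := by
  have hψ' : ∀ t, ψ t = U₀ t (Sfun t (U₀ (-t₀) ψ₀)) := by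
    intro t
    rw [hψ t, ← hUadd]
    congr 1
    ring
  have hψ0 : ψ 0 = U₀ (-t₀) ψ₀ := by
    rw [hψ' 0, hS, if_neg (lt_irrefl 0), hU0]; rfl
  have key : ∀ t, ψ t = U₀ t (U₀ (-t₀) ψ₀ + (if 0 < t then S (ψ 0) - ψ 0 else 0)) := by
    intro t
    rw [hψ' t, hS, hψ0]
    by_cases h : 0 < t
    · have h2 : (U₀ (-t₀)) ψ₀ + (S ((U₀ (-t₀)) ψ₀) - (U₀ (-t₀)) ψ₀)
          = S ((U₀ (-t₀)) ψ₀) := by abel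
      simp only [if_pos h, h2]
    · simp [h]
  refine ⟨key, ?_, ?_⟩
  · intro φ hφ
    have hφ0 : φ 0 = U₀ (-t₀) ψ₀ := by
      rw [hφ 0, if_neg (lt_irrefl 0), add_zero, hU0]; rfl
    funext t
    rw [hφ t, key t, hφ0, hψ0]
  · intro t
    rw [hψ' t, (U₀ t).norm_map, hS]
    by_cases h : 0 < t
    · rw [if_pos h, S.norm_map, (U₀ (-t₀)).norm_map]
    · rw [if_neg h, (U₀ (-t₀)).norm_map]
end

section
/- With the same normalization ∫ G(y)†G(y) dμ₀ = I and unit vector η ∈ ℋ, the reduced state vector χ(t,υ) = U(t)F_t(υ)†η satisfies the mean-square normalization ∫ ‖χ(t,υ)‖² dP₀(υ) = 1, where P₀ is the product of the Poisson law in time and the i.i.d. marks law μ₀. -/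
/-!
For fixed jump times the integral over the marks of `‖G(t_n,y_n)⋯G(t₁,y₁)η‖²` equals `‖η‖²`:
each conjugated family `U(r)†G(·)U(r)` is again a POVM, so the marks can be integrated out one
at a time, by induction on `n` for every initial vector. What remains of the `n`-th term is
`e^{-νt}νⁿ` times the volume `tⁿ/n!` of the simplex of ordered jump times, i.e. the Poisson
weights, which sum to `1`.
-/

open MeasureTheory
open scoped ENNReal

namespace MeasureTheory

variable {α : Type*} [MeasurableSpace α] (μ : Measure α) [SigmaFinite μ]

theorem lintegral_pi_fin_succ_insertNth {n : ℕ} (i : Fin (n + 1))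
    {f : (Fin (n + 1) → α) → ℝ≥0∞} (hf : Measurable f) :
    ∫⁻ x, f x ∂Measure.pi (fun _ => μ)
      = ∫⁻ a, ∫⁻ y, f (i.insertNth a y) ∂Measure.pi (fun _ => μ) ∂μ := by
  have e := (measurePreserving_piFinSuccAbove (fun _ : Fin (n + 1) => μ) i).symm
  rw [← e.lintegral_comp hf]
  exact lintegral_prod _ (hf.comp e.measurable).aemeasurable

end MeasureTheory

def orderedSimplex (n : ℕ) (t : ℝ) : Set (Fin n → ℝ) :=
  {x | (∀ i, x i ∈ Set.Ico 0 t) ∧ StrictMono x}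

theorem measurableSet_orderedSimplex (n : ℕ) (t : ℝ) :
    MeasurableSet (orderedSimplex n t) := by
  simp only [orderedSimplex, StrictMono, Set.ofPred_and, Set.ofPred_forall]
  exact (MeasurableSet.iInter fun i => measurable_pi_apply i measurableSet_Ico).inter <|
    MeasurableSet.iInter fun i => .iInter fun j => .iInter fun _ =>
      measurableSet_lt (measurable_pi_apply i) (measurable_pi_apply j)

theorem snoc_mem_orderedSimplex_iff {n : ℕ} {t s : ℝ} {y : Fin n → ℝ} :
    Fin.snoc y s ∈ orderedSimplex (n + 1) t ↔ s ∈ Set.Ico 0 t ∧ y ∈ orderedSimplex n s := by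
  simp only [← Fin.insertNth_last', orderedSimplex, Set.mem_ofPred_eq,
    Fin.strictMono_insertNth_iff, Fin.forall_iff_succAbove (Fin.last n),
    Fin.insertNth_apply_same, Fin.insertNth_apply_succAbove]
  simp only [Fin.castSucc_lt_last, true_implies, Set.mem_Ico]
  constructor
  · rintro ⟨⟨hs, hy⟩, hmono, hys, -⟩
    exact ⟨hs, fun i => ⟨(hy i).1, hys i⟩, hmono⟩
  · rintro ⟨hs, hy, hmono⟩
    exact ⟨⟨hs, fun i => ⟨(hy i).1, (hy i).2.trans hs.2⟩⟩, hmono, fun i => (hy i).2,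
      fun i h => absurd h (Fin.castSucc_lt_last i).not_ge⟩

theorem lintegral_indicator_orderedSimplex_snoc (n : ℕ) (t s : ℝ) :
    ∫⁻ y : Fin n → ℝ, (orderedSimplex (n + 1) t).indicator 1 (Fin.snoc y s)
      = (Set.Ico 0 t).indicator (fun s => volume (orderedSimplex n s)) s := by
  by_cases hs : s ∈ Set.Ico 0 t
  · have hslice : (fun y => (orderedSimplex (n + 1) t).indicator 1 (Fin.snoc y s))
        = (orderedSimplex n s).indicator (1 : (Fin n → ℝ) → ℝ≥0∞) := by
      ext y
      by_cases hy : y ∈ orderedSimplex n s <;> simp [hy, snoc_mem_orderedSimplex_iff, hs]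
    rw [hslice, lintegral_indicator_one (measurableSet_orderedSimplex n s),
      Set.indicator_of_mem hs]
  · have hslice : (fun y => (orderedSimplex (n + 1) t).indicator 1 (Fin.snoc y s))
        = fun _ => (0 : ℝ≥0∞) := by
      ext y
      simp [snoc_mem_orderedSimplex_iff, hs]
    rw [hslice, lintegral_zero, Set.indicator_of_notMem hs]

open Nat in
theorem volume_orderedSimplex (n : ℕ) {t : ℝ} (ht : 0 ≤ t) :
    volume (orderedSimplex n t) = ENNReal.ofReal (t ^ n / n !) := by
  induction n generalizing t with
  | zero =>
    have : orderedSimplex 0 t = Set.univ :=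
      Set.eq_univ_of_forall fun x => ⟨finZeroElim, fun i => i.elim0⟩
    simp [this, volume_pi]
  | succ n ih =>
    calc volume (orderedSimplex (n + 1) t)
        = ∫⁻ x, (orderedSimplex (n + 1) t).indicator 1 x :=
          (lintegral_indicator_one (measurableSet_orderedSimplex _ _)).symm
      _ = ∫⁻ s, (Set.Ico 0 t).indicator (fun s => volume (orderedSimplex n s)) s := by
          rw [volume_pi, lintegral_pi_fin_succ_insertNth _ (Fin.last n)
            (measurable_one.indicator (measurableSet_orderedSimplex _ _))]
          simp only [Fin.insertNth_last']
          exact lintegral_congr fun s => lintegral_indicator_orderedSimplex_snoc n t s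
      _ = ∫⁻ s in Set.Ico 0 t, ENNReal.ofReal (s ^ n / n !) := by
          rw [lintegral_indicator measurableSet_Ico]
          exact setLIntegral_congr_fun measurableSet_Ico fun s hs => ih hs.1
      _ = ENNReal.ofReal (t ^ (n + 1) / (n + 1)!) := by
          have hint : IntegrableOn (fun s : ℝ => s ^ n / n !) (Set.Ico 0 t) :=
            ((continuous_pow n).div_const _).integrableOn_Icc.mono_set Set.Ico_subset_Icc_self
          have hnonneg : 0 ≤ᵐ[volume.restrict (Set.Ico 0 t)] fun s : ℝ => s ^ n / n ! :=
            ae_restrict_of_forall_mem measurableSet_Ico fun s hs => by have := hs.1; positivity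
          rw [← ofReal_integral_eq_lintegral_ofReal hint hnonneg, restrict_Ico_eq_restrict_Ioc,
            ← intervalIntegral.integral_of_le ht, intervalIntegral.integral_div, integral_pow,
            zero_pow n.succ_ne_zero, sub_zero, div_div, Nat.factorial_succ, Nat.cast_mul,
            Nat.cast_succ]

section IteratedKernels

variable {T Λ E : Type*} [MeasurableSpace Λ] [MeasurableSpace E] {K : T → Λ → E → E}

theorem measurable_foldl_ofFn (hK : ∀ r, Measurable fun p : Λ × E => K r p.1 p.2)
    {n : ℕ} (x : Fin n → T) :
    Measurable fun p : (Fin n → Λ) × E =>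
      (List.ofFn fun j => (x j, p.1 j)).foldl (fun v q => K q.1 q.2 v) p.2 := by
  induction n with
  | zero => simpa using measurable_snd
  | succ n ih =>
    simp only [List.ofFn_succ, List.foldl_cons]
    have hstep : Measurable fun p : (Fin (n + 1) → Λ) × E =>
        ((fun j : Fin n => p.1 j.succ), K (x 0) (p.1 0) p.2) :=
      (measurable_pi_lambda _ fun j => measurable_fst.eval).prodMk <|
        (hK (x 0)).comp (f := fun p : (Fin (n + 1) → Λ) × E => (p.1 0, p.2))
          (measurable_fst.eval.prodMk measurable_snd)
    exact (ih _).comp hstep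

theorem lintegral_foldl_ofFn (μ : Measure Λ) [SigmaFinite μ] {f : E → ℝ≥0∞}
    (hf : Measurable f) (hK : ∀ r, Measurable fun p : Λ × E => K r p.1 p.2)
    (hKf : ∀ r v, ∫⁻ y, f (K r y v) ∂μ = f v) {n : ℕ} (x : Fin n → T) (v : E) :
    ∫⁻ y, f ((List.ofFn fun j => (x j, y j)).foldl (fun v q => K q.1 q.2 v) v)
      ∂Measure.pi (fun _ => μ) = f v := by
  induction n generalizing v with
  | zero => simp
  | succ n ih =>
    have hm : Measurable fun y : Fin (n + 1) → Λ =>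
        f ((List.ofFn fun j => (x j, y j)).foldl (fun v q => K q.1 q.2 v) v) :=
      hf.comp ((measurable_foldl_ofFn hK x).comp (measurable_id.prodMk measurable_const))
    rw [lintegral_pi_fin_succ_insertNth μ 0 hm]
    simp only [Fin.insertNth_zero', List.ofFn_succ, List.foldl_cons, Fin.cons_zero,
      Fin.cons_succ, ih, hKf]

end IteratedKernels

theorem tsum_poisson_setLIntegral_orderedSimplex {Y : ℕ → Type*} [∀ n, MeasurableSpace (Y n)]
    (P : ∀ n, Measure (Y n)) (g : ∀ n, (Fin n → ℝ) → Y n → ℝ≥0∞)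
    (hg : ∀ n x, ∫⁻ y, g n x y ∂P n = 1) {ν t : ℝ} (hν : 0 ≤ ν) (ht : 0 ≤ t) :
    ∑' n : ℕ, ∫⁻ x in orderedSimplex n t, ∫⁻ y,
        ENNReal.ofReal (Real.exp (-ν * t)) * ENNReal.ofReal ν ^ n * g n x y ∂P n = 1 := by
  have hterm (n : ℕ) :
      ∫⁻ x in orderedSimplex n t, ∫⁻ y,
          ENNReal.ofReal (Real.exp (-ν * t)) * ENNReal.ofReal ν ^ n * g n x y ∂P n
        = ENNReal.ofReal (Real.exp (-(ν * t)) * (ν * t) ^ n / n.factorial) := by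
    have hinner (x : Fin n → ℝ) :
        ∫⁻ y, ENNReal.ofReal (Real.exp (-ν * t)) * ENNReal.ofReal ν ^ n * g n x y ∂P n
          = ENNReal.ofReal (Real.exp (-ν * t)) * ENNReal.ofReal ν ^ n := by
      rw [lintegral_const_mul' _ _ (by finiteness), hg, mul_one]
    rw [lintegral_congr hinner, setLIntegral_const, volume_orderedSimplex n ht,
      ← ENNReal.ofReal_pow hν, ← ENNReal.ofReal_mul (by positivity),
      ← ENNReal.ofReal_mul (by positivity), neg_mul]
    ring_nf
  have hpoisson : HasSum (fun n : ℕ => Real.exp (-(ν * t)) * (ν * t) ^ n / n.factorial) 1 :=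
    ProbabilityTheory.hasSum_one_poissonMeasure ⟨ν * t, by positivity⟩
  rw [tsum_congr hterm, ← ENNReal.ofReal_tsum_of_nonneg (fun n => by positivity)
    hpoisson.summable, hpoisson.tsum_eq, ENNReal.ofReal_one]

/-- Mean-square normalization of the reduced state vector χ(t,υ) = U(t)F_t(υ)†η with
respect to P₀ = (Poisson law of intensity ν on [0,t)) ⊗ (i.i.d. marks law μ₀):
Σ_n e^{−νt} νⁿ ∫_{0≤t₁<…<t_n<t} ∫_{Λⁿ} ‖G(t_n,y_n)⋯G(t₁,y₁)η‖² dμ₀ⁿ dt = 1,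
for unit η, given the POVM normalization ∫‖G(y)ψ‖²dμ₀ = ‖ψ‖² and G(r,y) = U(r)†G(y)U(r). -/
theorem stmt14 {H Λ : Type*} [NormedAddCommGroup H] [InnerProductSpace ℂ H]
    [MeasurableSpace Λ] [MeasurableSpace H] [BorelSpace H]
    (μ₀ : Measure Λ) [IsProbabilityMeasure μ₀]
    (U : ℝ → (H ≃ₗᵢ[ℂ] H)) (G : Λ → (H →L[ℂ] H))
    (hmeas : Measurable fun p : Λ × H => G p.1 p.2)
    (hnorm : ∀ ψ : H, ∫⁻ y, (‖G y ψ‖₊ : ENNReal) ^ 2 ∂μ₀ = (‖ψ‖₊ : ENNReal) ^ 2)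
    (Gc : ℝ → Λ → H → H)
    (hGc : ∀ r y v, Gc r y v = (U r).symm (G y (U r v)))
    (ν tmax : ℝ) (hν : 0 < ν) (ht : 0 < tmax)
    (η : H) (hη : ‖η‖ = 1) :
    (∑' n : ℕ,
      ∫⁻ x in {x : Fin n → ℝ | (∀ i, x i ∈ Set.Ico 0 tmax) ∧ StrictMono x},
        ∫⁻ y : Fin n → Λ,
          ENNReal.ofReal (Real.exp (-ν * tmax)) * ENNReal.ofReal ν ^ n *
            (‖(List.ofFn fun j => ((x j, y j) : ℝ × Λ)).foldl
                (fun v p => Gc p.1 p.2 v) η‖₊ : ENNReal) ^ 2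
          ∂(Measure.pi fun _ => μ₀))
      = 1 := by
  have hGc_meas (r : ℝ) : Measurable fun p : Λ × H => Gc r p.1 p.2 := by
    simp_rw [hGc]
    exact (U r).symm.continuous.measurable.comp
      (hmeas.comp (measurable_fst.prodMk ((U r).continuous.measurable.comp measurable_snd)))
  have hGc_norm (r : ℝ) (v : H) :
      ∫⁻ y, (‖Gc r y v‖₊ : ℝ≥0∞) ^ 2 ∂μ₀ = (‖v‖₊ : ℝ≥0∞) ^ 2 := by
    simp only [hGc, LinearIsometryEquiv.nnnorm_map, hnorm]
  have hsq : Measurable fun v : H => (‖v‖₊ : ℝ≥0∞) ^ 2 :=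
    measurable_nnnorm.coe_nnreal_ennreal.pow_const 2
  have hη' : (‖η‖₊ : ℝ≥0∞) ^ 2 = 1 := by
    rw [show ‖η‖₊ = 1 from Subtype.ext hη, ENNReal.coe_one, one_pow]
  exact tsum_poisson_setLIntegral_orderedSimplex (fun _ => Measure.pi fun _ => μ₀)
    (fun _ x y =>
      (‖(List.ofFn fun j => (x j, y j)).foldl (fun v p => Gc p.1 p.2 v) η‖₊ : ℝ≥0∞) ^ 2)
    (fun _ x => (lintegral_foldl_ofFn μ₀ hsq hGc_meas hGc_norm x η).trans hη') hν.le ht.le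
end
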